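/- Let (Ω, 𝔉, (ℱ_k)_{k∈ℕ}, P) be a filtered probability space and p > 1/2. Let (A_k)_{k≥1} be events with A_k ∈ ℱ_k and P(A_k | ℱ_{k−1}) ≥ p almost surely for every k ≥ 1, and define W_k := Σ_{ℓ=1}^{k} (2·1(A_ℓ) − 1). Then lim sup_{k→∞} W_k = +∞ almost surely. -/

import Mathlib

open MeasureTheory Filter Topology

/-!
`W` is a submartingale, because its increment `2·1(A_{k+1}) - 1` has conditional expectation
`2 P(A_{k+1} | ℱ_k) - 1 ≥ 2p - 1 ≥ 0`. Its increments have absolute value `1`, so by the one-sided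
martingale bound a.e. path is either unbounded above or convergent; a sequence whose steps all have
length `1` cannot converge, hence `limsup W_k = +∞` a.s.
-/

lemma not_tendsto_of_le_norm_sub_succ {E : Type*} [SeminormedAddCommGroup E] {u : ℕ → E} {δ : ℝ}
    (hδ : 0 < δ) (hu : ∀ n, δ ≤ ‖u (n + 1) - u n‖) (c : E) : ¬ Tendsto u atTop (𝓝 c) := by
  intro hc
  have hstep : Tendsto (fun n => ‖u (n + 1) - u n‖) atTop (𝓝 0) := by
    simpa using ((hc.comp (tendsto_add_atTop_nat 1)).sub hc).norm
  obtain ⟨n, hn⟩ := (hstep.eventually (gt_mem_nhds hδ)).exists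
  exact (hu n).not_gt hn

lemma limsup_coe_eq_top_of_not_bddAbove {u : ℕ → ℝ} (hu : ¬ BddAbove (Set.range u)) :
    limsup (fun n => (u n : EReal)) atTop = ⊤ := by
  by_contra h
  obtain ⟨r, hr, -⟩ := EReal.lt_iff_exists_real_btwn.1 (lt_top_iff_ne_top.2 h)
  refine hu (IsBoundedUnder.bddAbove_range ⟨r, ?_⟩)
  filter_upwards [eventually_lt_of_limsup_lt hr] with n hn
  exact (EReal.coe_lt_coe_iff.1 hn).le

theorem Submartingale.ae_limsup_coe_eq_top {Ω : Type*} {m0 : MeasurableSpace Ω} {μ : Measure Ω}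
    [IsFiniteMeasure μ] {ℱ : Filtration ℕ m0} {f : ℕ → Ω → ℝ} (hf : Submartingale f ℱ μ)
    {R : NNReal} {δ : ℝ} (hδ : 0 < δ) (hbdd : ∀ᵐ ω ∂μ, ∀ i, |f (i + 1) ω - f i ω| ≤ R)
    (hsep : ∀ᵐ ω ∂μ, ∀ i, δ ≤ |f (i + 1) ω - f i ω|) :
    ∀ᵐ ω ∂μ, limsup (fun n => (f n ω : EReal)) atTop = ⊤ := by
  filter_upwards [hf.bddAbove_iff_exists_tendsto hbdd, hsep] with ω hconv hω
  refine limsup_coe_eq_top_of_not_bddAbove fun hb => ?_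
  obtain ⟨c, hc⟩ := hconv.1 hb
  exact not_tendsto_of_le_norm_sub_succ hδ hω c hc

lemma condExp_two_mul_indicator_sub_one_nonneg {Ω : Type*} {m m0 : MeasurableSpace Ω}
    {μ : Measure Ω} [IsFiniteMeasure μ] (hm : m ≤ m0) {s : Set Ω} (hs : MeasurableSet[m0] s)
    (hprob : ∀ᵐ ω ∂μ, 1 / 2 ≤ μ[s.indicator (fun _ => (1 : ℝ))|m] ω) :
    0 ≤ᵐ[μ] μ[fun ω => 2 * s.indicator (fun _ => (1 : ℝ)) ω - 1|m] := by
  have hint : Integrable (s.indicator fun _ => (1 : ℝ)) μ := (integrable_const 1).indicator hs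
  have hlin : μ[fun ω => 2 * s.indicator (fun _ => (1 : ℝ)) ω - 1|m]
      =ᵐ[μ] fun ω => 2 * μ[s.indicator (fun _ => (1 : ℝ))|m] ω - 1 := by
    change μ[(2 : ℝ) • s.indicator (fun _ => (1 : ℝ)) - fun _ => 1|m] =ᵐ[μ] _
    refine (condExp_sub (hint.smul 2) (integrable_const 1) m).trans ?_
    filter_upwards [condExp_smul (μ := μ) (2 : ℝ) (s.indicator fun _ => (1 : ℝ)) m] with ω hω
    simp only [Pi.sub_apply, hω, condExp_const hm (1 : ℝ), Pi.smul_apply, smul_eq_mul]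
  filter_upwards [hlin, hprob] with ω hω hω'
  rw [Pi.zero_apply, hω]
  linarith

section SignWalk

variable {Ω : Type*}

noncomputable def signWalk (A : ℕ → Set Ω) (k : ℕ) (ω : Ω) : ℝ :=
  ∑ ℓ ∈ Finset.Icc 1 k, (2 * (A ℓ).indicator (fun _ => (1 : ℝ)) ω - 1)

lemma signWalk_succ_sub (A : ℕ → Set Ω) (k : ℕ) (ω : Ω) :
    signWalk A (k + 1) ω - signWalk A k ω = 2 * (A (k + 1)).indicator (fun _ => (1 : ℝ)) ω - 1 := by
  rw [signWalk, Finset.sum_Icc_succ_top (Nat.le_add_left 1 k), signWalk, add_sub_cancel_left]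

lemma abs_signWalk_succ_sub (A : ℕ → Set Ω) (k : ℕ) (ω : Ω) :
    |signWalk A (k + 1) ω - signWalk A k ω| = 1 := by
  by_cases h : ω ∈ A (k + 1) <;> norm_num [signWalk_succ_sub, h]

variable {𝔉 : MeasurableSpace Ω} {ℱ : Filtration ℕ 𝔉} {A : ℕ → Set Ω}

lemma stronglyAdapted_signWalk (hAm : ∀ k, 1 ≤ k → MeasurableSet[ℱ k] (A k)) :
    StronglyAdapted ℱ (signWalk A) := by
  intro k
  refine Finset.stronglyMeasurable_fun_sum _ fun ℓ hℓ => ?_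
  obtain ⟨hℓ1, hℓk⟩ := Finset.mem_Icc.1 hℓ
  have hA : MeasurableSet[ℱ k] (A ℓ) := ℱ.mono hℓk _ (hAm ℓ hℓ1)
  exact ((stronglyMeasurable_const.indicator hA).const_mul 2).sub stronglyMeasurable_const

lemma integrable_signWalk (P : Measure Ω) [IsFiniteMeasure P]
    (hAm : ∀ k, 1 ≤ k → MeasurableSet[ℱ k] (A k)) (k : ℕ) : Integrable (signWalk A k) P := by
  refine integrable_finsetSum _ fun ℓ hℓ => ?_
  have hA : MeasurableSet (A ℓ) := ℱ.le ℓ _ (hAm ℓ (Finset.mem_Icc.1 hℓ).1)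
  exact (((integrable_const 1).indicator hA).const_mul 2).sub (integrable_const 1)

lemma submartingale_signWalk (P : Measure Ω) [IsFiniteMeasure P]
    (hAm : ∀ k, 1 ≤ k → MeasurableSet[ℱ k] (A k))
    (hAp : ∀ k, 1 ≤ k → ∀ᵐ ω ∂P, 1 / 2 ≤ (P[(A k).indicator (fun _ => (1 : ℝ))|ℱ (k - 1)]) ω) :
    Submartingale (signWalk A) ℱ P := by
  refine submartingale_of_condExp_sub_nonneg_nat (stronglyAdapted_signWalk hAm)
    (integrable_signWalk P hAm) fun k => ?_
  have hincr : signWalk A (k + 1) - signWalk A k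
      = fun ω => 2 * (A (k + 1)).indicator (fun _ => (1 : ℝ)) ω - 1 :=
    funext (signWalk_succ_sub A k)
  rw [hincr]
  exact condExp_two_mul_indicator_sub_one_nonneg (ℱ.le k)
    (ℱ.le (k + 1) _ (hAm (k + 1) k.succ_pos)) (hAp (k + 1) k.succ_pos)

end SignWalk

theorem stmt_11 {Ω : Type*} {𝔉 : MeasurableSpace Ω} (P : Measure Ω)
    [IsProbabilityMeasure P]
    (ℱ : Filtration ℕ 𝔉) (p : ℝ) (hp : 1 / 2 < p)
    (A : ℕ → Set Ω) (hAm : ∀ k, 1 ≤ k → MeasurableSet[ℱ k] (A k))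
    (hAp : ∀ k, 1 ≤ k → ∀ᵐ ω ∂P,
      p ≤ (P[Set.indicator (A k) (fun _ => (1 : ℝ))|ℱ (k - 1)]) ω) :
    ∀ᵐ ω ∂P,
      Filter.limsup
        (fun k => ((∑ ℓ ∈ Finset.Icc 1 k,
          (2 * Set.indicator (A ℓ) (fun _ => (1 : ℝ)) ω - 1) : ℝ) : EReal))
        atTop = ⊤ := by
  have hhalf : ∀ k, 1 ≤ k → ∀ᵐ ω ∂P,
      1 / 2 ≤ (P[(A k).indicator (fun _ => (1 : ℝ))|ℱ (k - 1)]) ω := fun k hk =>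
    (hAp k hk).mono fun _ hω => hp.le.trans hω
  have hstep : ∀ i ω, |signWalk A (i + 1) ω - signWalk A i ω| = 1 :=
    abs_signWalk_succ_sub A
  exact Submartingale.ae_limsup_coe_eq_top (submartingale_signWalk P hAm hhalf) (R := 1) one_pos
    (ae_of_all P fun ω i => (hstep i ω).le) (ae_of_all P fun ω i => (hstep i ω).ge)
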